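/- Let C be a small category with finite products and let A be an abelian category. Then the category FPFunct(C, A) of finite-product-preserving functors from C to A is an abelian category, with kernels and cokernels computed objectwise (i.e., the inclusion FPFunct(C, A) → (C ⥤ A) preserves kernels and cokernels). -/

import Mathlib

/-!
Limits commute with limits, so a limit of finite-product-preserving functors, computed
objectwise, again preserves finite products. Colimits commute with finite products once `A` is
preadditive, because finite products are then biproducts and `colim` is additive. Hence the
finite-product-preserving functors are closed in `C ⥤ A` under zero, finite products, kernels
and cokernels, and a full subcategory of an abelian category with these closure properties is
abelian, with kernels and cokernels computed in the ambient category.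
-/

open CategoryTheory Limits

/-- `FPFunct C A` is the full subcategory of `C ⥤ A` consisting of the functors
preserving finite products. -/
abbrev FPFunct (C : Type*) [Category C] (A : Type*) [Category A] :=
  ObjectProperty.FullSubcategory (fun F : C ⥤ A => PreservesFiniteProducts F)

namespace CategoryTheory.ObjectProperty

section FunctorCategory

variable {J C : Type*} [Category J] [Category C]

instance isClosedUnderLimitsOfShape_preservesLimitsOfShape (K K' : Type*) [Category K]
    [Category K'] [HasLimitsOfShape K' C] :
    (preservesLimitsOfShape K : ObjectProperty (J ⥤ C)).IsClosedUnderLimitsOfShape K' where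
  limitsOfShape_le := by
    rintro G ⟨h⟩
    have := h.prop_diag_obj
    have : PreservesLimitsOfShape K h.diag.flip :=
      preservesLimitsOfShape_of_evaluation _ _ fun j ↦
        preservesLimitsOfShape_of_natIso (flipCompEvaluation _ j).symm
    exact preservesLimitsOfShape_of_natIso
      (h.isLimit.conePointUniqueUpToIso (limit.isLimit h.diag) ≪≫ limitIsoFlipCompLim h.diag).symm

abbrev preservesFiniteProducts : ObjectProperty (J ⥤ C) := PreservesFiniteProducts

instance isClosedUnderLimitsOfShape_preservesFiniteProducts (K : Type*) [Category K]
    [HasLimitsOfShape K C] :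
    (preservesFiniteProducts : ObjectProperty (J ⥤ C)).IsClosedUnderLimitsOfShape K where
  limitsOfShape_le := by
    rintro G ⟨h⟩
    exact ⟨fun n ↦ (preservesLimitsOfShape (Discrete (Fin n))).prop_of_isLimit h.isLimit
      fun k ↦ (h.prop_diag_obj k).preserves n⟩

instance isClosedUnderColimitsOfShape_preservesFiniteProducts (K : Type*) [Category K]
    [Preadditive C] [HasColimitsOfShape K C] :
    (preservesFiniteProducts : ObjectProperty (J ⥤ C)).IsClosedUnderColimitsOfShape K where
  colimitsOfShape_le := by
    rintro G ⟨h⟩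
    exact ⟨fun n ↦ (preservesLimitsOfShape (Discrete (Fin n))).prop_of_isColimit h.isColimit
      fun k ↦ (h.prop_diag_obj k).preserves n⟩

instance [HasFiniteProducts C] :
    (preservesFiniteProducts : ObjectProperty (J ⥤ C)).IsClosedUnderFiniteProducts :=
  ⟨fun _ _ ↦ inferInstance⟩

end FunctorCategory

variable {C : Type*} [Category C] [HasZeroMorphisms C] (P : ObjectProperty C)

instance [P.IsClosedUnderLimitsOfShape WalkingParallelPair] : P.IsClosedUnderKernels where
  kernels_le := by
    rintro _ ⟨f, k, hk, hX, hY⟩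
    exact P.prop_of_isLimit hk (by rintro (_ | _) <;> assumption)

instance [P.IsClosedUnderColimitsOfShape WalkingParallelPair] : P.IsClosedUnderCokernels where
  cokernels_le := by
    rintro _ ⟨f, k, hk, hX, hY⟩
    exact P.prop_of_isColimit hk (by rintro (_ | _) <;> assumption)

instance [HasZeroObject C] [P.IsClosedUnderLimitsOfShape (Discrete.{0} PEmpty)] :
    P.ContainsZero where
  exists_zero := ⟨_, isZero_zero C, P.prop_of_isTerminal _ (isZero_zero C).isTerminal⟩

end CategoryTheory.ObjectProperty

theorem fpfunct_abelian_general
    (C : Type*) [SmallCategory C]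
    (A : Type*) [Category A] [Abelian A] :
    (∃ _ : Abelian (FPFunct C A), True) ∧
    PreservesLimitsOfShape WalkingParallelPair
      (ObjectProperty.ι (fun F : C ⥤ A => PreservesFiniteProducts F)) ∧
    PreservesColimitsOfShape WalkingParallelPair
      (ObjectProperty.ι (fun F : C ⥤ A => PreservesFiniteProducts F)) :=
  ⟨⟨inferInstance, trivial⟩, inferInstance, inferInstance⟩

/-- Let `C` be a small category with finite products and `A` an abelian category.  Then
the category `FPFunct C A` of finite-product-preserving functors `C ⥤ A` is abelian, and
kernels and cokernels in it are computed objectwise: the inclusion into the functor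
category `C ⥤ A` (where (co)limits are objectwise) preserves kernels and cokernels. -/
theorem fpfunct_abelian
    (C : Type*) [SmallCategory C] [HasFiniteProducts C]
    (A : Type*) [Category A] [Abelian A] :
    (∃ _ : Abelian (FPFunct C A), True) ∧
    PreservesLimitsOfShape WalkingParallelPair
      (ObjectProperty.ι (fun F : C ⥤ A => PreservesFiniteProducts F)) ∧
    PreservesColimitsOfShape WalkingParallelPair
      (ObjectProperty.ι (fun F : C ⥤ A => PreservesFiniteProducts F)) :=
  fpfunct_abelian_general C A
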